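/- Let K ⊆ ℝⁿ be a detour set with complementary components Ω₀, Ω₁, Ω₂, … (Ω₀ unbounded). If the n-dimensional Lebesgue measure of ∂Ω_k is zero for every k ≥ 0, and Σ_{k≥1} diam(Ω_k)ⁿ < ∞, then K has n-dimensional Lebesgue measure zero. -/

import Mathlib

/-!
Fix one detour direction `u` and slice by the lines `w + ℝ u`, `w ∈ u⊥`; by Fubini it suffices
that almost every such line `L` meets `K` in a null set. Fubini also shows that for almost every
`L` each `L ∩ ∂Ω_k` is null, and, since integrating over `u⊥` the sum of `diam Ω_k` over the
`k ≥ 1` with `L ∩ cl Ω_k ≠ ∅` costs at most `C ∑ diam(Ω_k)ⁿ`, that this sum is finite.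

On such a line, a detour path at scale `ε` is connected, so its projection to `L` is an interval;
it covers `K ∩ L` up to two end pieces of length `2ε`, and consists of pieces of finitely many
`cl Ω_k`, all meeting `L`. The pieces with `k ≥ m` project onto sets of measure at most
`diam Ω_k`, so they cost at most a tail of the finite sum above. The pieces with `k < m` only
contain points of `K ∩ L` that are `4ε`-close to `cl Ω_k`; as `ε → 0` their measure tends to that
of `K ∩ L ∩ cl Ω_k ⊆ L ∩ ∂Ω_k`, which is `0`.
-/

open MeasureTheory Metric Set Filter
open scoped ENNReal NNReal Topology

/-- The line through the point `w` in the direction `v`. -/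
def lineThrough {n : ℕ} (w v : EuclideanSpace ℝ (Fin n)) : Set (EuclideanSpace ℝ (Fin n)) :=
  {x | ∃ t : ℝ, x = w + t • v}

/-- The line `L` has the detour property with respect to the family `Ω` of complementary
components and the closed ball `B`: for every `ε > 0` there is a path `γ` whose trace lies
within Hausdorff distance `ε` of `L ∩ B`, such that (i) the trace of `γ` is contained in
`⋃ k, closure (Ω k)`; (ii) `γ` meets only finitely many of the sets `closure (Ω k)`; and
(iii) every `closure (Ω k)` met by `γ` is also met by `L`. -/
def HasDetourProperty {n : ℕ} (Ω : ℕ → Set (EuclideanSpace ℝ (Fin n)))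
    (B : Set (EuclideanSpace ℝ (Fin n))) (L : Set (EuclideanSpace ℝ (Fin n))) : Prop :=
  ∀ ε > (0 : ℝ), ∃ γ : ℝ → EuclideanSpace ℝ (Fin n), ContinuousOn γ (Icc 0 1) ∧
    hausdorffDist (γ '' Icc 0 1) (L ∩ B) ≤ ε ∧
    γ '' Icc 0 1 ⊆ ⋃ k, closure (Ω k) ∧
    {k | (γ '' Icc 0 1 ∩ closure (Ω k)).Nonempty}.Finite ∧
    {k | (γ '' Icc 0 1 ∩ closure (Ω k)).Nonempty} ⊆ {k | (L ∩ closure (Ω k)).Nonempty}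

/-- `K` is a detour set with complementary components `Ω 0, Ω 1, Ω 2, …`:
`K` is compact, `Ω` is an injective enumeration of the (infinitely many) connected components
of the complement of `K`, with `Ω 0` the unbounded component and `Ω k`, `k ≥ 1`, the bounded
ones, and there exist a closed ball `B` containing `K` in its interior and `n` linearly
independent directions such that, for each of these directions, almost every line parallel to
it (lines parallel to `v` being parametrized by the points of the orthogonal complement of `v`,
equipped with its Lebesgue measure) has the detour property. -/
structure IsDetourSet (n : ℕ) (K : Set (EuclideanSpace ℝ (Fin n)))
    (Ω : ℕ → Set (EuclideanSpace ℝ (Fin n))) : Prop where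
  compact : IsCompact K
  inj : Function.Injective Ω
  component : ∀ k, ∃ x ∈ Kᶜ, Ω k = connectedComponentIn Kᶜ x
  surj : ∀ x ∈ Kᶜ, ∃ k, Ω k = connectedComponentIn Kᶜ x
  unbounded : ¬ Bornology.IsBounded (Ω 0)
  bounded : ∀ k : ℕ, k ≠ 0 → Bornology.IsBounded (Ω k)
  detour : ∃ (x : EuclideanSpace ℝ (Fin n)) (r : ℝ), 0 < r ∧ K ⊆ ball x r ∧
    ∃ v : Fin n → EuclideanSpace ℝ (Fin n), LinearIndependent ℝ v ∧
      ∀ i : Fin n, ∀ᵐ w : ↥(Submodule.span ℝ {v i})ᗮ,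
        HasDetourProperty Ω (closedBall x r)
          (lineThrough (w : EuclideanSpace ℝ (Fin n)) (v i))

open Module
open scoped RealInnerProductSpace

theorem ENNReal.sum_le_tsum_nat_add {f : ℕ → ℝ≥0∞} {m : ℕ} {s : Finset ℕ}
    (hs : ∀ k ∈ s, m ≤ k) : ∑ k ∈ s, f k ≤ ∑' k, f (k + m) :=
  calc ∑ k ∈ s, f k = ∑ k ∈ s.preimage (· + m) (add_left_injective m).injOn, f (k + m) :=
        (Finset.sum_preimage _ _ _ _ fun k hk hkm =>
          (hkm ⟨k - m, Nat.sub_add_cancel (hs k hk)⟩).elim).symm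
    _ ≤ ∑' k, f (k + m) := ENNReal.sum_le_tsum _

theorem mem_Icc_union_of_abs_sub_lt {a b s t δ : ℝ} (hs : s ∈ Icc a b) (hts : |t - s| < δ) :
    t ∈ Icc (a - δ) a ∪ Icc b (b + δ) ∪ Icc a b := by
  rw [abs_lt] at hts
  rcases lt_or_ge t a with hta | hat
  · exact Or.inl (Or.inl ⟨by linarith [hs.1], hta.le⟩)
  rcases le_or_gt t b with htb | hbt
  · exact Or.inr ⟨hat, htb⟩
  · exact Or.inl (Or.inr ⟨hbt.le, by linarith [hs.2]⟩)

theorem MeasureTheory.Measure.addHaar_le_ofReal_diam_pow {F : Type*} [NormedAddCommGroup F]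
    [NormedSpace ℝ F] [MeasurableSpace F] [BorelSpace F] [FiniteDimensional ℝ F]
    (μ : Measure F) [μ.IsAddHaarMeasure] {s : Set F} (hs : Bornology.IsBounded s) :
    μ s ≤ ENNReal.ofReal (diam s ^ finrank ℝ F) * μ (closedBall 0 1) := by
  obtain rfl | ⟨x, hx⟩ := s.eq_empty_or_nonempty
  · simp
  calc μ s ≤ μ (closedBall x (diam s)) :=
        measure_mono fun y hy => dist_le_diam_of_mem hs hy hx
    _ = _ := Measure.addHaar_closedBall' μ x diam_nonneg

theorem ae_tsum_indicator_ne_top {α : Type*} [MeasurableSpace α] {μ : Measure α}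
    (A : ℕ → Set α) (d : ℕ → ℝ≥0∞) (h : ∑' k, d k * μ (A k) ≠ ∞) :
    ∀ᵐ x ∂μ, ∑' k, {k | x ∈ A k}.indicator d k ≠ ∞ := by
  -- the `A k` need not be measurable: pass to measurable hulls of the same measure
  set f : α → ℝ≥0∞ := fun x => ∑' k, (toMeasurable μ (A k)).indicator (fun _ => d k) x
  have hf : Measurable f :=
    .tsum fun k => measurable_const.indicator (measurableSet_toMeasurable μ (A k))
  have hint : ∫⁻ x, f x ∂μ ≠ ∞ := by
    rwa [lintegral_tsum fun k => (measurable_const.indicator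
      (measurableSet_toMeasurable μ (A k))).aemeasurable, tsum_congr fun k =>
        (lintegral_indicator_const (measurableSet_toMeasurable μ (A k)) (d k)).trans
          (by rw [measure_toMeasurable])]
  filter_upwards [ae_lt_top hf hint] with x hx
  refine ne_top_of_le_ne_top hx.ne (ENNReal.tsum_le_tsum fun k => ?_)
  change (A k).indicator (fun _ => d k) x ≤ _
  exact indicator_le_indicator_of_subset (subset_toMeasurable μ (A k)) (fun _ => zero_le) x

theorem tendsto_measure_preimage_cthickening_inter {α X : Type*} [MeasurableSpace α]
    [PseudoMetricSpace X] [MeasurableSpace X] [OpensMeasurableSpace X] {μ : Measure α}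
    {q : α → X} (hq : Measurable q) {S : Set α} (hSμ : μ S ≠ ∞)
    (C : Set X) :
    Tendsto (fun δ => μ (q ⁻¹' cthickening δ C ∩ S)) (𝓝 0) (𝓝 (μ (q ⁻¹' closure C ∩ S))) := by
  have hmap : ∀ s, MeasurableSet s → (μ.restrict S).map q s = μ (q ⁻¹' s ∩ S) := fun s hs => by
    rw [Measure.map_apply hq hs, Measure.restrict_apply (hq hs)]
  have := tendsto_measure_cthickening (μ := (μ.restrict S).map q) (s := C) ⟨1, one_pos, ?_⟩
  · simpa only [hmap _ isClosed_cthickening.measurableSet,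
      hmap _ isClosed_closure.measurableSet] using this
  · rw [hmap _ isClosed_cthickening.measurableSet]
    exact ne_top_of_le_ne_top hSμ (measure_mono inter_subset_right)

section OrthogonalSlices

variable {E : Type*} [NormedAddCommGroup E] [InnerProductSpace ℝ E] {u : E}

theorem isometry_add_smul (w : E) (hu : ‖u‖ = 1) : Isometry fun t : ℝ => w + t • u :=
  Isometry.of_dist_eq fun s t => by
    rw [dist_add_left, dist_eq_norm, ← sub_smul, norm_smul, hu, mul_one, Real.dist_eq,
      Real.norm_eq_abs]

theorem lipschitzWith_inner_sub (w : E) (hu : ‖u‖ = 1) :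
    LipschitzWith 1 fun x : E => ⟪x - w, u⟫ :=
  LipschitzWith.mk_one fun x y => by
    rw [Real.dist_eq, ← inner_sub_left, sub_sub_sub_cancel_right, dist_eq_norm]
    simpa [hu] using abs_real_inner_le_norm (x - y) u

theorem inner_add_smul_sub_self (w : E) (hu : ‖u‖ = 1) (t : ℝ) : ⟪w + t • u - w, u⟫ = t := by
  simp [real_inner_smul_left, hu]

def orthogonalShadow (u : E) (s : Set E) : Set (ℝ ∙ u)ᗮ :=
  {w | (range (fun t : ℝ => (w : E) + t • u) ∩ s).Nonempty}

variable [FiniteDimensional ℝ E] [MeasurableSpace E] [BorelSpace E]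

theorem measurePreserving_add_smul (hu : ‖u‖ = 1) :
    MeasurePreserving (fun p : (ℝ ∙ u)ᗮ × ℝ => (p.1 : E) + p.2 • u) volume volume := by
  let e : ℝ ≃ₗᵢ[ℝ] (ℝ ∙ u) := LinearIsometryEquiv.toSpanUnitSingleton u hu
  have he : MeasurePreserving (Prod.map (id : (ℝ ∙ u)ᗮ → (ℝ ∙ u)ᗮ) e) volume volume := by
    rw [Measure.volume_eq_prod, Measure.volume_eq_prod]
    exact (MeasurePreserving.id volume).prod e.measurePreserving
  have hswap : MeasurePreserving (Prod.swap : (ℝ ∙ u)ᗮ × (ℝ ∙ u) → _) volume volume := by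
    rw [Measure.volume_eq_prod, Measure.volume_eq_prod]
    exact Measure.measurePreserving_swap
  have hΦ : (fun p : (ℝ ∙ u)ᗮ × ℝ => (p.1 : E) + p.2 • u) =
      (ℝ ∙ u).orthogonalDecomposition.symm ∘ WithLp.toLp 2 ∘ Prod.swap ∘ Prod.map id e := by
    funext p
    simp [e, add_comm]
  rw [hΦ]
  exact ((ℝ ∙ u).orthogonalDecomposition.symm.measurePreserving.comp
    (WithLp.volume_preserving_toLp _ _)).comp (hswap.comp he)

theorem volume_eq_zero_iff_ae_volume_slice (hu : ‖u‖ = 1) {s : Set E} (hs : MeasurableSet s) :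
    volume s = 0 ↔ ∀ᵐ w : (ℝ ∙ u)ᗮ, volume {t : ℝ | (w : E) + t • u ∈ s} = 0 := by
  have hΦ := measurePreserving_add_smul hu
  rw [← hΦ.measure_preimage hs.nullMeasurableSet, Measure.volume_eq_prod,
    Measure.measure_prod_null (hs.preimage hΦ.measurable)]
  rfl

theorem volume_orthogonalShadow_le (u : E) {s : Set E} (hs : Bornology.IsBounded s) :
    volume (orthogonalShadow u s) ≤
      ENNReal.ofReal (diam s ^ finrank ℝ (ℝ ∙ u)ᗮ) * volume (closedBall (0 : (ℝ ∙ u)ᗮ) 1) := by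
  set P := (ℝ ∙ u)ᗮ.orthogonalProjectionOnto
  have hP : LipschitzWith 1 P := (ℝ ∙ u)ᗮ.lipschitzWith_orthogonalProjectionOnto
  have hshadow : orthogonalShadow u s ⊆ P '' s := by
    rintro w ⟨_, ⟨t, rfl⟩, hts⟩
    refine ⟨_, hts, ?_⟩
    simp [P, Submodule.orthogonalProjectionOnto_orthogonalComplement_singleton_eq_zero]
  have hdiam : diam (P '' s) ≤ diam s := by
    simpa using hP.diam_image_le s hs
  calc _ ≤ volume (P '' s) := measure_mono hshadow
    _ ≤ ENNReal.ofReal (diam (P '' s) ^ finrank ℝ (ℝ ∙ u)ᗮ) *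
          volume (closedBall (0 : (ℝ ∙ u)ᗮ) 1) :=
        Measure.addHaar_le_ofReal_diam_pow _ (hP.isBounded_image hs)
    _ ≤ _ := by gcongr

theorem tsum_ediam_mul_volume_orthogonalShadow_ne_top (hu : u ≠ 0) {s : ℕ → Set E}
    (hs : ∀ k, Bornology.IsBounded (s k)) (hsum : Summable fun k => diam (s k) ^ finrank ℝ E) :
    ∑' k, ediam (s k) * volume (orthogonalShadow u (closure (s k))) ≠ ∞ := by
  have hdim : finrank ℝ (ℝ ∙ u)ᗮ + 1 = finrank ℝ E := by
    rw [← (ℝ ∙ u).finrank_add_finrank_orthogonal, finrank_span_singleton hu, add_comm]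
  have hterm : ∀ k, ediam (s k) * volume (orthogonalShadow u (closure (s k))) ≤
        ENNReal.ofReal (diam (s k) ^ finrank ℝ E) * volume (closedBall (0 : (ℝ ∙ u)ᗮ) 1) := fun k =>
    calc _ ≤ ENNReal.ofReal (diam (s k)) * (ENNReal.ofReal (diam (closure (s k)) ^
          finrank ℝ (ℝ ∙ u)ᗮ) * volume (closedBall (0 : (ℝ ∙ u)ᗮ) 1)) := by
          rw [diam, ENNReal.ofReal_toReal (hs k).ediam_ne_top]
          gcongr
          exact volume_orthogonalShadow_le u (hs k).closure
      _ = _ := by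
          rw [diam_closure, ← mul_assoc, ← ENNReal.ofReal_mul diam_nonneg, ← pow_succ', hdim]
  refine ne_top_of_le_ne_top ?_ (ENNReal.tsum_le_tsum hterm)
  rw [ENNReal.tsum_mul_right, ← ENNReal.ofReal_tsum_of_nonneg (fun k => by positivity) hsum]
  exact ENNReal.mul_ne_top ENNReal.ofReal_ne_top measure_closedBall_lt_top.ne

end OrthogonalSlices

section DetourLine

variable {n : ℕ} {Ω : ℕ → Set (EuclideanSpace ℝ (Fin n))} {K B : Set (EuclideanSpace ℝ (Fin n))}
  {q : ℝ → EuclideanSpace ℝ (Fin n)} {π : EuclideanSpace ℝ (Fin n) → ℝ}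

theorem exists_cover_of_hasDetourProperty (hq : Isometry q) (hπ : LipschitzWith 1 π)
    (hπq : ∀ t, π (q t) = t) (hdet : HasDetourProperty Ω B (range q))
    (hB : Bornology.IsBounded B) (hKB : K ⊆ B) {ε : ℝ} (hε : 0 < ε) :
    ∃ (a b : ℝ) (F : Finset ℕ), (∀ k ∈ F, (range q ∩ closure (Ω k)).Nonempty) ∧
      q ⁻¹' K ⊆ Icc (a - 2 * ε) a ∪ Icc b (b + 2 * ε) ∪
        ⋃ k ∈ F, q ⁻¹' cthickening (4 * ε) (closure (Ω k)) ∩ π '' closure (Ω k) := by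
  have hπ' : ∀ x y, dist (π x) (π y) ≤ dist x y := fun x y => by simpa using hπ.dist_le_mul x y
  obtain hK | ⟨t₀, ht₀⟩ := (q ⁻¹' K).eq_empty_or_nonempty
  · exact ⟨0, 0, ∅, by simp, by simp [hK]⟩
  obtain ⟨γ, hγ, hγL, hγΩ, hfin, hmet⟩ := hdet ε hε
  set Γ := γ '' Icc 0 1
  have hdist : hausdorffDist Γ (range q ∩ B) < 2 * ε := by linarith
  -- `hausdorffDist` is `0` when `hausdorffEDist` is infinite, so `hγL` alone says nothing
  have hedist : hausdorffEDist Γ (range q ∩ B) ≠ ⊤ :=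
    hausdorffEDist_ne_top_of_nonempty_of_bounded ((nonempty_Icc.2 zero_le_one).image γ)
      ⟨q t₀, mem_range_self t₀, hKB ht₀⟩ (isCompact_Icc.image_of_continuousOn hγ).isBounded
      (hB.subset inter_subset_right)
  obtain ⟨a, b, hab⟩ : ∃ a b, π '' Γ = Icc a b := by
    simpa only [Γ, image_image] using
      ⟨_, _, (hπ.continuous.comp_continuousOn hγ).image_Icc zero_le_one⟩
  refine ⟨a, b, hfin.toFinset, fun k hk => hmet (hfin.mem_toFinset.1 hk), fun t ht => ?_⟩
  obtain ⟨p, hpΓ, hp⟩ := exists_dist_lt_of_hausdorffDist_lt'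
    (show q t ∈ range q ∩ B from ⟨mem_range_self t, hKB ht⟩) hdist hedist
  have htp : |t - π p| < 2 * ε := by
    simpa [← Real.dist_eq, hπq, dist_comm] using (hπ' p (q t)).trans_lt hp
  rcases mem_Icc_union_of_abs_sub_lt (hab ▸ mem_image_of_mem π hpΓ) htp with hend | hmid
  · exact Or.inl hend
  obtain ⟨p', hp'Γ, rfl⟩ := hab.symm ▸ hmid
  obtain ⟨k, hp'k⟩ := mem_iUnion.1 (hγΩ hp'Γ)
  obtain ⟨y, ⟨⟨s, rfl⟩, -⟩, hy⟩ := exists_dist_lt_of_hausdorffDist_lt hp'Γ hdist hedist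
  have hts : dist (q (π p')) (q s) < 2 * ε := by
    rw [hq.dist_eq, ← hπq s]
    exact (hπ' p' (q s)).trans_lt hy
  refine Or.inr (mem_iUnion₂.2 ⟨k, hfin.mem_toFinset.2 ⟨p', hp'Γ, hp'k⟩, ?_, p', hp'k, rfl⟩)
  refine mem_cthickening_of_dist_le _ p' _ _ hp'k ?_
  linarith [dist_triangle (q (π p')) (q s) p', dist_comm p' (q s)]

theorem volume_preimage_le_of_hasDetourProperty (hq : Isometry q) (hπ : LipschitzWith 1 π)
    (hπq : ∀ t, π (q t) = t) (hdet : HasDetourProperty Ω B (range q))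
    (hB : Bornology.IsBounded B) (hKB : K ⊆ B) {ψ : ℕ → ℝ≥0∞}
    (hψ : ∀ k, (range q ∩ closure (Ω k)).Nonempty → ediam (Ω k) ≤ ψ k) {ε : ℝ} (hε : 0 < ε)
    (m : ℕ) :
    volume (q ⁻¹' K) ≤ ENNReal.ofReal (4 * ε) +
      ∑ k ∈ Finset.range m, volume (q ⁻¹' cthickening (4 * ε) (closure (Ω k)) ∩ q ⁻¹' K) +
        ∑' k, ψ (k + m) := by
  classical
  obtain ⟨a, b, F, hF, hcover⟩ := exists_cover_of_hasDetourProperty hq hπ hπq hdet hB hKB hε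
  set T : ℕ → Set ℝ := fun k => q ⁻¹' cthickening (4 * ε) (closure (Ω k)) ∩ q ⁻¹' K
  have hcover' : q ⁻¹' K ⊆ Icc (a - 2 * ε) a ∪ Icc b (b + 2 * ε) ∪
      ((⋃ k ∈ F.filter (· < m), T k) ∪ ⋃ k ∈ F.filter (m ≤ ·), π '' closure (Ω k)) := by
    intro t ht
    rcases hcover ht with h | h
    · exact Or.inl h
    obtain ⟨k, hk, hthick, himage⟩ := mem_iUnion₂.1 h
    rcases lt_or_ge k m with hkm | hkm
    · exact Or.inr (Or.inl (mem_iUnion₂.2 ⟨k, Finset.mem_filter.2 ⟨hk, hkm⟩, hthick, ht⟩))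
    · exact Or.inr (Or.inr (mem_iUnion₂.2 ⟨k, Finset.mem_filter.2 ⟨hk, hkm⟩, himage⟩))
  have hends : volume (Icc (a - 2 * ε) a ∪ Icc b (b + 2 * ε)) ≤ ENNReal.ofReal (4 * ε) := by
    refine (measure_union_le _ _).trans ?_
    rw [Real.volume_Icc, Real.volume_Icc, ← ENNReal.ofReal_add (by linarith) (by linarith)]
    exact ENNReal.ofReal_le_ofReal (by linarith)
  have hsmall : volume (⋃ k ∈ F.filter (· < m), T k) ≤ ∑ k ∈ Finset.range m, volume (T k) :=
    (measure_biUnion_finset_le _ _).trans <| Finset.sum_le_sum_of_subset fun k hk =>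
      Finset.mem_range.2 (Finset.mem_filter.1 hk).2
  have hlarge : volume (⋃ k ∈ F.filter (m ≤ ·), π '' closure (Ω k)) ≤ ∑' k, ψ (k + m) := by
    calc _ ≤ ∑ k ∈ F.filter (m ≤ ·), volume (π '' closure (Ω k)) := measure_biUnion_finset_le _ _
      _ ≤ ∑ k ∈ F.filter (m ≤ ·), ψ k := Finset.sum_le_sum fun k hk => calc
          volume (π '' closure (Ω k)) ≤ ediam (π '' closure (Ω k)) := Real.volume_le_diam _
          _ ≤ ediam (Ω k) := by simpa [ediam_closure] using hπ.ediam_image_le (closure (Ω k))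
          _ ≤ ψ k := hψ k (hF k (Finset.mem_filter.1 hk).1)
      _ ≤ ∑' k, ψ (k + m) :=
          ENNReal.sum_le_tsum_nat_add fun k hk => (Finset.mem_filter.1 hk).2
  calc volume (q ⁻¹' K) ≤ _ := measure_mono hcover'
    _ ≤ _ := (measure_union_le _ _).trans (add_le_add hends (measure_union_le _ _))
    _ ≤ _ := by rw [← add_assoc]; gcongr

theorem volume_preimage_le_tsum_of_hasDetourProperty (hq : Isometry q) (hπ : LipschitzWith 1 π)
    (hπq : ∀ t, π (q t) = t) (hdet : HasDetourProperty Ω B (range q))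
    (hB : Bornology.IsBounded B) (hKB : K ⊆ B) (hΩK : ∀ k, Ω k ⊆ Kᶜ)
    (hfr : ∀ k, volume (q ⁻¹' frontier (Ω k)) = 0) {ψ : ℕ → ℝ≥0∞}
    (hψ : ∀ k, (range q ∩ closure (Ω k)).Nonempty → ediam (Ω k) ≤ ψ k) (m : ℕ) :
    volume (q ⁻¹' K) ≤ ∑' k, ψ (k + m) := by
  have hKfin : volume (q ⁻¹' K) ≠ ∞ := by
    refine ((hπ.isBounded_image hB).subset fun t ht => ?_).measure_lt_top.ne
    exact ⟨q t, hKB ht, hπq t⟩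
  have hslice : ∀ k, volume (q ⁻¹' closure (Ω k) ∩ q ⁻¹' K) = 0 := fun k =>
    measure_mono_null (fun t ht => show q t ∈ closure (Ω k) \ interior (Ω k) from
      ⟨ht.1, fun hint => hΩK k (interior_subset hint) ht.2⟩) (hfr k)
  have hlim : Tendsto (fun ε => ENNReal.ofReal (4 * ε) +
      ∑ k ∈ Finset.range m, volume (q ⁻¹' cthickening (4 * ε) (closure (Ω k)) ∩ q ⁻¹' K) +
        ∑' k, ψ (k + m)) (𝓝 0) (𝓝 (∑' k, ψ (k + m))) := by
    have h4ε : Tendsto (fun ε : ℝ => 4 * ε) (𝓝 0) (𝓝 0) := by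
      simpa using (tendsto_id (x := 𝓝 (0 : ℝ))).const_mul 4
    have := ((ENNReal.tendsto_ofReal h4ε).add (tendsto_finsetSum (Finset.range m) fun k _ =>
      (tendsto_measure_preimage_cthickening_inter hq.continuous.measurable hKfin
        (closure (Ω k))).comp h4ε)).add_const (∑' k, ψ (k + m))
    simpa [hslice] using this
  refine ge_of_tendsto (hlim.mono_left (nhdsWithin_le_nhds (s := Ioi 0))) ?_
  filter_upwards [self_mem_nhdsWithin] with ε (hε : 0 < ε)
  exact volume_preimage_le_of_hasDetourProperty hq hπ hπq hdet hB hKB hψ hε m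

theorem volume_preimage_eq_zero_of_hasDetourProperty (hq : Isometry q) (hπ : LipschitzWith 1 π)
    (hπq : ∀ t, π (q t) = t) (hdet : HasDetourProperty Ω B (range q))
    (hB : Bornology.IsBounded B) (hKB : K ⊆ B) (hΩK : ∀ k, Ω k ⊆ Kᶜ)
    (hfr : ∀ k, volume (q ⁻¹' frontier (Ω k)) = 0)
    (hsum : ∑' k, {k | (range q ∩ closure (Ω (k + 1))).Nonempty}.indicator
      (fun k => ediam (Ω (k + 1))) k ≠ ∞) :
    volume (q ⁻¹' K) = 0 := by
  set ψ : ℕ → ℝ≥0∞ := {k | (range q ∩ closure (Ω k)).Nonempty}.indicator (fun k => ediam (Ω k))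
  have hψ : ∀ k, (range q ∩ closure (Ω k)).Nonempty → ediam (Ω k) ≤ ψ k := fun k hk =>
    (indicator_of_mem (show k ∈ {k | (range q ∩ closure (Ω k)).Nonempty} from hk)
      (fun k => ediam (Ω k))).ge
  refine le_antisymm (ge_of_tendsto' (ENNReal.tendsto_sum_nat_add (fun k => ψ (k + 1)) hsum)
    fun m => ?_) zero_le
  exact volume_preimage_le_tsum_of_hasDetourProperty hq hπ hπq hdet hB hKB hΩK hfr hψ (m + 1)

end DetourLine

theorem volume_eq_zero_of_ae_hasDetourProperty {n : ℕ} {K B : Set (EuclideanSpace ℝ (Fin n))}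
    {Ω : ℕ → Set (EuclideanSpace ℝ (Fin n))} {u : EuclideanSpace ℝ (Fin n)} (hu : ‖u‖ = 1)
    (hK : MeasurableSet K) (hB : Bornology.IsBounded B) (hKB : K ⊆ B) (hΩK : ∀ k, Ω k ⊆ Kᶜ)
    (hΩ : ∀ k, Bornology.IsBounded (Ω (k + 1))) (hfr : ∀ k, volume (frontier (Ω k)) = 0)
    (hsum : Summable fun k => diam (Ω (k + 1)) ^ n)
    (hdet : ∀ᵐ w : (ℝ ∙ u)ᗮ, HasDetourProperty Ω B
      (range fun t : ℝ => (w : EuclideanSpace ℝ (Fin n)) + t • u)) :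
    volume K = 0 := by
  have hfrontier : ∀ᵐ w : (ℝ ∙ u)ᗮ, ∀ k,
      volume {t : ℝ | (w : EuclideanSpace ℝ (Fin n)) + t • u ∈ frontier (Ω k)} = 0 :=
    ae_all_iff.2 fun k =>
      (volume_eq_zero_iff_ae_volume_slice hu isClosed_frontier.measurableSet).1 (hfr k)
  have hdiam := ae_tsum_indicator_ne_top _ _ (tsum_ediam_mul_volume_orthogonalShadow_ne_top
    (norm_ne_zero_iff.1 (hu.trans_ne one_ne_zero)) hΩ (by rwa [finrank_euclideanSpace_fin]))
  rw [volume_eq_zero_iff_ae_volume_slice hu hK]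
  filter_upwards [hdet, hfrontier, hdiam] with w hw hwfr hwdiam
  exact volume_preimage_eq_zero_of_hasDetourProperty (isometry_add_smul _ hu)
    (lipschitzWith_inner_sub _ hu) (inner_add_smul_sub_self _ hu) hw hB hKB hΩK hwfr hwdiam

theorem IsDetourSet.subset_compl {n : ℕ} {K : Set (EuclideanSpace ℝ (Fin n))}
    {Ω : ℕ → Set (EuclideanSpace ℝ (Fin n))} (hK : IsDetourSet n K Ω) (k : ℕ) : Ω k ⊆ Kᶜ := by
  obtain ⟨x, -, hx⟩ := hK.component k
  exact hx ▸ connectedComponentIn_subset _ _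

theorem IsDetourSet.dim_pos {n : ℕ} {K : Set (EuclideanSpace ℝ (Fin n))}
    {Ω : ℕ → Set (EuclideanSpace ℝ (Fin n))} (hK : IsDetourSet n K Ω) : 0 < n := by
  refine Nat.pos_of_ne_zero fun hn => ?_
  subst hn
  exact hK.unbounded (Ω 0).toFinite.isBounded

theorem lineThrough_eq_range_smul {n : ℕ} (w v : EuclideanSpace ℝ (Fin n)) {c : ℝ} (hc : c ≠ 0) :
    lineThrough w v = range fun t : ℝ => w + t • c • v := by
  ext x
  constructor
  · rintro ⟨t, rfl⟩
    exact ⟨t / c, by simp only [smul_smul, div_mul_cancel₀ t hc]⟩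
  · rintro ⟨t, rfl⟩
    exact ⟨t * c, by rw [mul_smul]⟩

theorem statement6 {n : ℕ} (K : Set (EuclideanSpace ℝ (Fin n)))
    (Ω : ℕ → Set (EuclideanSpace ℝ (Fin n))) (hK : IsDetourSet n K Ω)
    (hfr : ∀ k : ℕ, volume (frontier (Ω k)) = 0)
    (hsum : Summable fun k : ℕ => Metric.diam (Ω (k + 1)) ^ n) :
    volume K = 0 := by
  obtain ⟨x₀, r, -, hKr, v, hv, hdet⟩ := hK.detour
  obtain ⟨i⟩ : Nonempty (Fin n) := Fin.pos_iff_nonempty.1 hK.dim_pos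
  have hc : ‖v i‖⁻¹ ≠ 0 := inv_ne_zero (norm_ne_zero_iff.2 (hv.ne_zero i))
  have hu : ‖‖v i‖⁻¹ • v i‖ = 1 := norm_smul_inv_norm (hv.ne_zero i)
  refine volume_eq_zero_of_ae_hasDetourProperty hu
    hK.compact.isClosed.measurableSet isBounded_closedBall (hKr.trans ball_subset_closedBall)
    hK.subset_compl (fun k => hK.bounded (k + 1) k.succ_ne_zero) hfr hsum ?_
  have h := hdet i
  rw [← Submodule.span_singleton_smul_eq (isUnit_iff_ne_zero.2 hc)] at h
  simpa only [lineThrough_eq_range_smul _ _ hc] using h
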